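/- Let B be an integral domain with an action of the group H = {e, σ} of order 2, where σ acts nontrivially, and let A = B^H be the invariant subring. Assume 2 is invertible in B. Let 𝔭 be a height-one prime of A such that there is exactly one prime 𝔭' of B lying over 𝔭, with B_{𝔭'} a discrete valuation ring with valuation v, and such that A_𝔭 is a discrete valuation ring whose maximal ideal is generated by an element s ∈ A. Assume σ acts trivially on B/𝔭'. Then v(s) = 2. -/

import Mathlib

/-!
`σ` preserves `𝔭'`, so it extends to an automorphism `φ` of `B_𝔭'` with `v ∘ φ = v`. If
`v(b) = 1`, the norm `b σ(b)` lies in `𝔭` and has valuation `2`; since `s` generates `𝔭 A_𝔭`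
it divides this norm up to an element outside `𝔭`, so `1 ≤ v(s) ≤ 2`. If `v(s) = 1`, then `s`
is a `φ`-fixed uniformizer, and writing the nonzero anti-invariant `σ(b₀) - b₀` as `u sⁿ` gives a
unit `u` with `φ(u) = -u`. As `σ` is trivial on the residue field, `2u` is then in the maximal
ideal, contradicting the invertibility of `2`.
-/

/-- The subring of invariants of a ring involution `σ` (the invariant ring `A = B^H` for
the order-2 group `H = {e, σ}`). -/
def invariantSubring {B : Type*} [CommRing B] (σ : B ≃+* B) : Subring B :=
  RingHom.eqLocus (σ : B →+* B) (RingHom.id B)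

open IsDiscreteValuationRing

section DVR

variable {R : Type*} [CommRing R] [IsDomain R] [IsDiscreteValuationRing R]

theorem IsDiscreteValuationRing.addVal_ringEquiv (φ : R ≃+* R) (x : R) :
    addVal R (φ x) = addVal R x := by
  rcases eq_or_ne x 0 with rfl | hx
  · simp
  obtain ⟨ϖ, hϖ⟩ := exists_irreducible R
  obtain ⟨n, u, rfl⟩ := eq_unit_mul_pow_irreducible hx hϖ
  rw [addVal_def' u hϖ n]
  exact addVal_def _ (Units.map (φ : R →* R) u) ((MulEquiv.irreducible_iff φ).mpr hϖ) n (by simp)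

theorem IsDiscreteValuationRing.irreducible_of_addVal_eq_one {x : R} (hx : addVal R x = 1) :
    Irreducible x := by
  obtain ⟨ϖ, hϖ⟩ := exists_irreducible R
  rw [← addVal_uniformizer hϖ, addVal_eq_iff_associated] at hx
  exact hx.symm.irreducible hϖ

theorem IsDiscreteValuationRing.eq_zero_of_ringEquiv_eq_neg (φ : R ≃+* R)
    (hres : ∀ x, φ x - x ∈ IsLocalRing.maximalIdeal R) (h2 : IsUnit (2 : R)) {ϖ : R}
    (hϖ : Irreducible ϖ) (hφϖ : φ ϖ = ϖ) {x : R} (hx : φ x = -x) : x = 0 := by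
  by_contra hx0
  obtain ⟨n, u, rfl⟩ := eq_unit_mul_pow_irreducible hx0 hϖ
  have hu : φ u = -u := by
    rw [map_mul, map_pow, hφϖ, ← neg_mul] at hx
    exact mul_right_cancel₀ (pow_ne_zero n hϖ.ne_zero) hx
  have hmem : -(2 * (u : R)) ∈ IsLocalRing.maximalIdeal R := by
    convert hres u using 1
    rw [hu]
    ring
  exact (IsLocalRing.mem_maximalIdeal _).mp hmem (h2.mul u.isUnit).neg

end DVR

section Localization

variable {B : Type*} [CommRing B] {P : Ideal B} [P.IsPrime]

theorem Ideal.map_primeCompl_of_forall_sub_mem (σ : B ≃+* B) (htriv : ∀ b, σ b - b ∈ P) :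
    P.primeCompl.map σ.toMonoidHom = P.primeCompl := by
  have hσ : ∀ b, σ b ∈ P ↔ b ∈ P := fun b => by
    simpa using Ideal.add_mem_iff_right P (htriv b) (b := b)
  ext x
  exact (Submonoid.mem_map_equiv (f := σ.toMulEquiv)).trans
    (by simp [Ideal.mem_primeCompl_iff, ← hσ (σ.symm x)])

variable (Bp : Type*) [CommRing Bp] [Algebra B Bp] [IsLocalization.AtPrime Bp P]

theorem IsLocalization.AtPrime.ringEquivOfRingEquiv_sub_mem_maximalIdeal [IsLocalRing Bp]
    (σ : B ≃+* B) (H : P.primeCompl.map σ.toMonoidHom = P.primeCompl)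
    (htriv : ∀ b, σ b - b ∈ P) (x : Bp) :
    IsLocalization.ringEquivOfRingEquiv Bp Bp σ H x - x ∈ IsLocalRing.maximalIdeal Bp := by
  obtain ⟨⟨b, t⟩, rfl⟩ := IsLocalization.mk'_surjective P.primeCompl x
  rw [IsLocalization.ringEquivOfRingEquiv_mk', ← IsLocalization.mk'_sub,
    IsLocalization.AtPrime.mk'_mem_maximal_iff Bp P]
  have key : σ b * t - b * σ t = (σ b - b) * t - b * (σ t - t) := by ring
  exact key ▸ P.sub_mem (P.mul_mem_right _ (htriv b)) (P.mul_mem_left _ (htriv t))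

variable [IsDomain Bp] [IsDiscreteValuationRing Bp]

theorem IsDiscreteValuationRing.exists_addVal_algebraMap_eq_one (M : Submonoid B)
    [IsLocalization M Bp] : ∃ b : B, addVal Bp (algebraMap B Bp b) = 1 := by
  obtain ⟨ϖ, hϖ⟩ := exists_irreducible Bp
  obtain ⟨⟨b, t⟩, ht⟩ := IsLocalization.surj M ϖ
  refine ⟨b, ?_⟩
  rw [← ht, addVal_mul, addVal_uniformizer hϖ,
    addVal_eq_zero_iff.mpr (IsLocalization.map_units Bp t), add_zero]

theorem IsDiscreteValuationRing.addVal_algebraMap_ne_zero_iff (b : B) :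
    addVal Bp (algebraMap B Bp b) ≠ 0 ↔ b ∈ P := by
  rw [Ne, addVal_eq_zero_iff, IsLocalization.AtPrime.isUnit_to_map_iff Bp P,
    Ideal.mem_primeCompl_iff, not_not]

theorem IsDiscreteValuationRing.addVal_algebraMap_le_of_maximalIdeal_eq_span
    {R : Type*} [CommRing R] {𝔭 : Ideal R} [𝔭.IsPrime]
    (Ap : Type*) [CommRing Ap] [Algebra R Ap] [IsLocalization.AtPrime Ap 𝔭] [IsLocalRing Ap]
    (f : R →+* B) (hover : P.comap f = 𝔭) {s : R}
    (hs : IsLocalRing.maximalIdeal Ap = Ideal.span {algebraMap R Ap s}) {a : R} (ha : f a ∈ P) :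
    addVal Bp (algebraMap B Bp (f s)) ≤ addVal Bp (algebraMap B Bp (f a)) := by
  have ha𝔭 : a ∈ 𝔭 := hover ▸ ha
  have hmem := (IsLocalization.AtPrime.to_map_mem_maximal_iff Ap 𝔭 a).mpr ha𝔭
  rw [hs, Ideal.mem_span_singleton'] at hmem
  obtain ⟨x, hx⟩ := hmem
  obtain ⟨⟨a', u⟩, hu⟩ := IsLocalization.surj 𝔭.primeCompl x
  -- clearing denominators in `a = x s` gives `a (c u) = s (c a')` with `c u ∉ 𝔭`
  obtain ⟨c, hc⟩ := IsLocalization.exists_of_eq (M := 𝔭.primeCompl) (S := Ap)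
    (x := a * u) (y := a' * s) (by rw [map_mul, map_mul, ← hx, ← hu]; ring)
  have hcu : f (c * u) ∉ P := fun h => (c * u).2 (hover ▸ h)
  have hunit := (IsLocalization.AtPrime.isUnit_to_map_iff Bp P _).mpr hcu
  rw [addVal_le_iff_dvd, ← hunit.dvd_mul_right, ← map_mul, ← map_mul]
  refine ⟨algebraMap B Bp (f (c * a')), ?_⟩
  rw [← map_mul, ← map_mul]
  congr 1
  have hfc := congrArg f hc
  simp only [map_mul] at hfc ⊢
  linear_combination hfc

theorem IsDiscreteValuationRing.addVal_algebraMap_apply_eq_of_forall_sub_mem {σ : B ≃+* B}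
    (htriv : ∀ b, σ b - b ∈ P) (b : B) :
    addVal Bp (algebraMap B Bp (σ b)) = addVal Bp (algebraMap B Bp b) := by
  rw [← IsLocalization.ringEquivOfRingEquiv_eq (S := Bp) (Q := Bp)
    (Ideal.map_primeCompl_of_forall_sub_mem σ htriv), addVal_ringEquiv]

theorem IsDiscreteValuationRing.addVal_algebraMap_ne_one_of_apply_eq_self [IsDomain B]
    {σ : B ≃+* B} (htriv : ∀ b, σ b - b ∈ P) (hinv : ∀ b, σ (σ b) = b)
    (hnontriv : ∃ b, σ b ≠ b) (h2 : IsUnit (2 : B)) {t : B} (ht : σ t = t) :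
    addVal Bp (algebraMap B Bp t) ≠ 1 := by
  intro h1
  set φ := IsLocalization.ringEquivOfRingEquiv Bp Bp σ
    (Ideal.map_primeCompl_of_forall_sub_mem σ htriv)
  have hφ : ∀ b, φ (algebraMap B Bp b) = algebraMap B Bp (σ b) :=
    IsLocalization.ringEquivOfRingEquiv_eq _
  obtain ⟨b, hb⟩ := hnontriv
  refine sub_ne_zero.mpr hb (IsLocalization.injective Bp P.primeCompl_le_nonZeroDivisors ?_)
  rw [map_zero]
  refine eq_zero_of_ringEquiv_eq_neg φ
    (IsLocalization.AtPrime.ringEquivOfRingEquiv_sub_mem_maximalIdeal Bp σ _ htriv)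
    (by rw [← map_ofNat (algebraMap B Bp) 2]; exact h2.map _) (irreducible_of_addVal_eq_one h1)
    (by rw [hφ, ht]) ?_
  rw [hφ, map_sub, hinv, ← map_neg, neg_sub]

end Localization

theorem stmt_0_general {B : Type*} [CommRing B] [IsDomain B]
    (σ : B ≃+* B) (hinv : ∀ b, σ (σ b) = b) (hnontriv : ∃ b, σ b ≠ b)
    (h2 : IsUnit (2 : B))
    (A : Subring B) (hA : A = invariantSubring σ)
    (𝔭 : Ideal A) (h𝔭 : 𝔭.IsPrime)
    (𝔭' : Ideal B) (h𝔭' : 𝔭'.IsPrime)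
    (hover : 𝔭'.comap A.subtype = 𝔭)
    (htriv : ∀ b : B, σ b - b ∈ 𝔭')
    (Ap : Type*) [CommRing Ap] [IsDomain Ap] [Algebra A Ap]
    [IsLocalization.AtPrime Ap 𝔭] [IsDiscreteValuationRing Ap]
    (Bp : Type*) [CommRing Bp] [IsDomain Bp] [Algebra B Bp]
    [IsLocalization.AtPrime Bp 𝔭'] [IsDiscreteValuationRing Bp]
    (s : A) (hs : IsLocalRing.maximalIdeal Ap = Ideal.span {algebraMap A Ap s}) :
    IsDiscreteValuationRing.addVal Bp (algebraMap B Bp (s : B)) = 2 := by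
  have hfix : ∀ a : A, σ a = a := fun a => (hA ▸ a.2 : (a : B) ∈ invariantSubring σ)
  have hv0 : addVal Bp (algebraMap B Bp s) ≠ 0 := by
    rw [addVal_algebraMap_ne_zero_iff Bp (P := 𝔭'), ← A.subtype_apply, ← Ideal.mem_comap, hover,
      ← IsLocalization.AtPrime.to_map_mem_maximal_iff Ap 𝔭 s, hs]
    exact Ideal.mem_span_singleton_self _
  obtain ⟨b, hb⟩ := exists_addVal_algebraMap_eq_one Bp 𝔭'.primeCompl
  have hnorm : b * σ b ∈ A := by
    rw [hA]
    change σ (b * σ b) = b * σ b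
    rw [map_mul, hinv, mul_comm]
  have hv2 : addVal Bp (algebraMap B Bp s) ≤ 2 := by
    calc _ ≤ addVal Bp (algebraMap B Bp (b * σ b)) :=
          addVal_algebraMap_le_of_maximalIdeal_eq_span Bp Ap A.subtype hover hs (a := ⟨_, hnorm⟩)
            (𝔭'.mul_mem_right _ ((addVal_algebraMap_ne_zero_iff Bp b).mp (by simp [hb])))
      _ = 2 := by
          rw [map_mul, addVal_mul, addVal_algebraMap_apply_eq_of_forall_sub_mem Bp htriv, hb]
          rfl
  have hv1 := addVal_algebraMap_ne_one_of_apply_eq_self Bp htriv hinv hnontriv h2 (hfix s)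
  lift addVal Bp (algebraMap B Bp s) to ℕ using ne_top_of_le_ne_top (by decide) hv2 with v hv
  norm_cast at *
  omega

/-- Let `B` be an integral domain with an action of `H = {e, σ}` of order 2,
`σ` acting nontrivially, `A = B^H`, and `2` invertible in `B`.  Let `𝔭` be a (height-one)
prime of `A` such that exactly one prime `𝔭'` of `B` lies over `𝔭`, with `B_{𝔭'}` a
discrete valuation ring (with normalized additive valuation `addVal`), and such that `A_𝔭`
is a discrete valuation ring whose maximal ideal is generated by `s ∈ A`.  Assume `σ` acts
trivially on `B/𝔭'`.  Then `v(s) = 2`. -/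
theorem stmt_0 {B : Type*} [CommRing B] [IsDomain B]
    (σ : B ≃+* B) (hinv : ∀ b, σ (σ b) = b) (hnontriv : ∃ b, σ b ≠ b)
    (h2 : IsUnit (2 : B))
    (A : Subring B) (hA : A = invariantSubring σ)
    (𝔭 : Ideal A) (h𝔭 : 𝔭.IsPrime)
    (𝔭' : Ideal B) (h𝔭' : 𝔭'.IsPrime)
    (hover : 𝔭'.comap A.subtype = 𝔭)
    (huniq : ∀ q : Ideal B, q.IsPrime → q.comap A.subtype = 𝔭 → q = 𝔭')
    (htriv : ∀ b : B, σ b - b ∈ 𝔭')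
    (Ap : Type*) [CommRing Ap] [IsDomain Ap] [Algebra A Ap]
    [IsLocalization.AtPrime Ap 𝔭] [IsDiscreteValuationRing Ap]
    (Bp : Type*) [CommRing Bp] [IsDomain Bp] [Algebra B Bp]
    [IsLocalization.AtPrime Bp 𝔭'] [IsDiscreteValuationRing Bp]
    (s : A) (hs : IsLocalRing.maximalIdeal Ap = Ideal.span {algebraMap A Ap s}) :
    IsDiscreteValuationRing.addVal Bp (algebraMap B Bp (s : B)) = 2 :=
  stmt_0_general σ hinv hnontriv h2 A hA 𝔭 h𝔭 𝔭' h𝔭' hover htriv Ap Bp s hs
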